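/- Let A, Q, X, Y be random variables on a common probability space, each taking finitely many values, and let Z = f(X) for some function f of the values of X. Then I(Y ; A | ⟨Q, Z⟩) ≤ I(Y ; X | Q) + H(A | ⟨Q, X⟩). -/

import Mathlib

/-!
Write `Z = f X`. The gap between the two sides is a sum of three Shannon quantities,
`I(Y;X|Q) + H(A|Q,X) - I(Y;A|Q,Z) = I(Y;Z|Q) + I(Y;X|A,Q,Z) + H(A|Y,X,Q)`,
an identity between joint entropies which only uses that `(X, Z)` generates the same partition
of `Ω` as `X`. Each term is nonnegative: conditional mutual information by Gibbs' inequality,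
and conditional entropy because `H(A|W) = I(A;A|W)`.
-/

open MeasureTheory

/-- Shannon entropy (in nats) of a random variable `X` taking finitely many values,
with the convention `0 log 0 = 0`. -/
noncomputable def entropy {Ω : Type*} [MeasurableSpace Ω] {S : Type*} [Fintype S]
    (μ : Measure Ω) (X : Ω → S) : ℝ :=
  -∑ s : S, (μ (X ⁻¹' {s})).toReal * Real.log (μ (X ⁻¹' {s})).toReal

/-- Conditional entropy `H(X | Y)`, defined via the chain rule `H(X | Y) = H(X, Y) − H(Y)`. -/
noncomputable def condEntropy {Ω : Type*} [MeasurableSpace Ω] {S T : Type*} [Fintype S]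
    [Fintype T] (μ : Measure Ω) (X : Ω → S) (Y : Ω → T) : ℝ :=
  entropy μ (fun ω => (X ω, Y ω)) - entropy μ Y

/-- Mutual information `I(X ; Y) = H(X) − H(X | Y)`. -/
noncomputable def mutualInfo {Ω : Type*} [MeasurableSpace Ω] {S T : Type*} [Fintype S]
    [Fintype T] (μ : Measure Ω) (X : Ω → S) (Y : Ω → T) : ℝ :=
  entropy μ X - condEntropy μ X Y

/-- Conditional mutual information `I(X ; Y | Z) = H(X | Z) + H(Y | Z) − H(X, Y | Z)`. -/
noncomputable def condMutualInfo {Ω : Type*} [MeasurableSpace Ω] {S T U : Type*} [Fintype S]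
    [Fintype T] [Fintype U] (μ : Measure Ω) (X : Ω → S) (Y : Ω → T) (Z : Ω → U) : ℝ :=
  condEntropy μ X Z + condEntropy μ Y Z - condEntropy μ (fun ω => (X ω, Y ω)) Z

open Finset Real

section

variable {Ω : Type*} [MeasurableSpace Ω] {μ : Measure Ω} {S T U : Type*}

lemma entropy_eq_sum_negMulLog [Fintype S] (R : Ω → S) :
    entropy μ R = ∑ s, negMulLog (μ (R ⁻¹' {s})).toReal := by
  simp [entropy, negMulLog]

lemma mem_range_of_negMulLog_ne_zero {R : Ω → S} {s : S}
    (h : negMulLog (μ (R ⁻¹' {s})).toReal ≠ 0) : s ∈ Set.range R := by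
  by_contra hs
  simp [Set.preimage_singleton_eq_empty.2 hs] at h

lemma entropy_eq_of_eq_iff [Fintype S] [Fintype T] {R₁ : Ω → S} {R₂ : Ω → T}
    (h : ∀ ω ω', R₁ ω = R₁ ω' ↔ R₂ ω = R₂ ω') : entropy μ R₁ = entropy μ R₂ := by
  have hfiber : ∀ ω, R₁ ⁻¹' {R₁ ω} = R₂ ⁻¹' {R₂ ω} := fun ω => Set.ext fun ω' => h ω' ω
  simp only [entropy_eq_sum_negMulLog]
  refine sum_bij_ne_zero (fun _ _ hs => R₂ (mem_range_of_negMulLog_ne_zero hs).choose)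
    (fun _ _ _ => mem_univ _) ?_ ?_ ?_
  · intro s₁ _ hs₁ s₂ _ hs₂ heq
    rw [← (mem_range_of_negMulLog_ne_zero hs₁).choose_spec,
      ← (mem_range_of_negMulLog_ne_zero hs₂).choose_spec]
    exact (h _ _).2 heq
  · intro t _ ht
    obtain ⟨ω, rfl⟩ := mem_range_of_negMulLog_ne_zero ht
    have hs : negMulLog (μ (R₁ ⁻¹' {R₁ ω})).toReal ≠ 0 := by rwa [hfiber]
    exact ⟨R₁ ω, mem_univ _, hs, (h _ _).1 (mem_range_of_negMulLog_ne_zero hs).choose_spec⟩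
  · intro s _ hs
    rw [← hfiber, (mem_range_of_negMulLog_ne_zero hs).choose_spec]

lemma mul_log_le_mul_log_add_sub {p q : ℝ} (hp : 0 ≤ p) (hq : 0 ≤ q) (hpq : q = 0 → p = 0) :
    p * log q ≤ p * log p + (q - p) := by
  rcases hp.eq_or_lt with rfl | hp
  · simpa using hq
  have hq : 0 < q := hq.lt_of_ne fun h => hp.ne' (hpq h.symm)
  calc p * log q = p * log p + p * log (q / p) := by
        rw [log_div hq.ne' hp.ne']; ring
    _ ≤ p * log p + p * (q / p - 1) := by
        gcongr; exact log_le_sub_one_of_pos (div_pos hq hp)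
    _ = p * log p + (q - p) := by field_simp

lemma sum_mul_log_le_sum_mul_log {ι : Type*} [Fintype ι] {p q : ι → ℝ} (hp : ∀ i, 0 ≤ p i)
    (hq : ∀ i, 0 ≤ q i) (hpq : ∀ i, q i = 0 → p i = 0) (hsum : ∑ i, q i ≤ ∑ i, p i) :
    ∑ i, p i * log (q i) ≤ ∑ i, p i * log (p i) := by
  have h := sum_le_sum fun i (_ : i ∈ univ) => mul_log_le_mul_log_add_sub (hp i) (hq i) (hpq i)
  rw [sum_add_distrib, sum_sub_distrib] at h
  linarith

lemma mul_log_mul_div_eq {p a b c : ℝ} (hp : 0 ≤ p) (ha : p ≤ a) (hb : p ≤ b) (hc : p ≤ c) :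
    p * log (a * b / c) = p * log a + p * log b - p * log c := by
  rcases hp.eq_or_lt with rfl | hp
  · simp
  rw [log_div (mul_pos (hp.trans_le ha) (hp.trans_le hb)).ne' (hp.trans_le hc).ne',
    log_mul (hp.trans_le ha).ne' (hp.trans_le hb).ne']
  ring

lemma sum_mul_div_eq_of_sum_eq [Fintype S] [Fintype T] [Fintype U] {a : S × U → ℝ}
    {b : T × U → ℝ} {c : U → ℝ} (ha : ∀ u, ∑ s, a (s, u) = c u) (hb : ∀ u, ∑ t, b (t, u) = c u) :
    ∑ v : S × T × U, a (v.1, v.2.2) * b (v.2.1, v.2.2) / c v.2.2 = ∑ u, c u :=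
  calc ∑ v : S × T × U, a (v.1, v.2.2) * b (v.2.1, v.2.2) / c v.2.2
      = ∑ u, (∑ s, a (s, u)) * (∑ t, b (t, u)) / c u := by
        simp only [Fintype.sum_prod_type, sum_mul_sum, sum_div]
        exact (sum_congr rfl fun _ _ => sum_comm).trans sum_comm
    _ = ∑ u, c u := by simp only [ha, hb, mul_self_div_self]

section FiniteMeasure

variable [IsFiniteMeasure μ]

lemma sum_toReal_measure_preimage_singleton [MeasurableSpace S] [MeasurableSingletonClass S]
    {R : Ω → S} (hR : Measurable R) (s : Finset S) :
    ∑ x ∈ s, (μ (R ⁻¹' {x})).toReal = (μ (R ⁻¹' s)).toReal := by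
  rw [← ENNReal.toReal_sum fun _ _ => measure_ne_top μ _,
    sum_measure_preimage_singleton s fun x _ => hR (measurableSet_singleton x)]

lemma entropy_comp_eq_neg_sum [Fintype S] [Fintype T] [MeasurableSpace S]
    [MeasurableSingletonClass S] {R : Ω → S} (hR : Measurable R) (g : S → T) :
    entropy μ (fun ω => g (R ω)) = -∑ s, (μ (R ⁻¹' {s})).toReal
      * log (μ ((fun ω => g (R ω)) ⁻¹' {g s})).toReal := by
  classical
  rw [entropy, ← sum_fiberwise univ g]
  congr 1
  refine sum_congr rfl fun t _ => ?_
  rw [sum_congr rfl fun s hs => by rw [(mem_filter.1 hs).2], ← sum_mul,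
    sum_toReal_measure_preimage_singleton hR]
  congr 3; ext; simp

lemma toReal_measure_preimage_singleton_le_comp (R : Ω → S) (g : S → T) (s : S) :
    (μ (R ⁻¹' {s})).toReal ≤ (μ ((fun ω => g (R ω)) ⁻¹' {g s})).toReal :=
  ENNReal.toReal_mono (measure_ne_top μ _) (measure_mono fun ω hω => by simp_all)

lemma sum_toReal_measure_preimage_prodMk [Fintype S] [MeasurableSpace S]
    [MeasurableSingletonClass S] {W : Ω → S} (hW : Measurable W) (V : Ω → T) (t : T) :
    ∑ s, (μ ((fun ω => (W ω, V ω)) ⁻¹' {(s, t)})).toReal = (μ (V ⁻¹' {t})).toReal := by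
  have hslice : ∀ s, μ ((fun ω => (W ω, V ω)) ⁻¹' {(s, t)}) = μ.restrict (V ⁻¹' {t}) (W ⁻¹' {s}) :=
    fun s => by
      rw [Measure.restrict_apply (hW (measurableSet_singleton s))]; congr 1; ext; simp
  simp_rw [hslice, sum_toReal_measure_preimage_singleton hW, coe_univ, Set.preimage_univ,
    Measure.restrict_apply_univ]

theorem condMutualInfo_nonneg [Fintype S] [Fintype T] [Fintype U]
    [MeasurableSpace S] [MeasurableSingletonClass S] [MeasurableSpace T]
    [MeasurableSingletonClass T] [MeasurableSpace U] [MeasurableSingletonClass U]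
    {X : Ω → S} {Y : Ω → T} {Z : Ω → U} (hX : Measurable X) (hY : Measurable Y)
    (hZ : Measurable Z) : 0 ≤ condMutualInfo μ X Y Z := by
  set R := fun ω => (X ω, Y ω, Z ω)
  have hR : Measurable R := hX.prodMk (hY.prodMk hZ)
  set p : S × T × U → ℝ := fun v => (μ (R ⁻¹' {v})).toReal
  set a : S × U → ℝ := fun w => (μ ((fun ω => (X ω, Z ω)) ⁻¹' {w})).toReal
  set b : T × U → ℝ := fun w => (μ ((fun ω => (Y ω, Z ω)) ⁻¹' {w})).toReal
  set c : U → ℝ := fun u => (μ (Z ⁻¹' {u})).toReal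
  have eXZ : entropy μ (fun ω => (X ω, Z ω)) = -∑ v, p v * log (a (v.1, v.2.2)) :=
    entropy_comp_eq_neg_sum hR fun v => (v.1, v.2.2)
  have eYZ : entropy μ (fun ω => (Y ω, Z ω)) = -∑ v, p v * log (b (v.2.1, v.2.2)) :=
    entropy_comp_eq_neg_sum hR fun v => (v.2.1, v.2.2)
  have eZ : entropy μ Z = -∑ v, p v * log (c v.2.2) := entropy_comp_eq_neg_sum hR fun v => v.2.2
  have eXYZ : entropy μ (fun ω => ((X ω, Y ω), Z ω)) = -∑ v, p v * log (p v) :=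
    entropy_eq_of_eq_iff fun _ _ => by simp [R, and_assoc]
  have hpa : ∀ v, p v ≤ a (v.1, v.2.2) :=
    toReal_measure_preimage_singleton_le_comp R fun v => (v.1, v.2.2)
  have hpb : ∀ v, p v ≤ b (v.2.1, v.2.2) :=
    toReal_measure_preimage_singleton_le_comp R fun v => (v.2.1, v.2.2)
  have hpc : ∀ v, p v ≤ c v.2.2 := toReal_measure_preimage_singleton_le_comp R fun v => v.2.2
  -- `I(X;Y|Z)` is the relative entropy of `p` with respect to `q = a b / c`, which has the
  -- same total mass as `p`.
  have hlog : ∀ v, p v * log (a (v.1, v.2.2) * b (v.2.1, v.2.2) / c v.2.2)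
      = p v * log (a (v.1, v.2.2)) + p v * log (b (v.2.1, v.2.2)) - p v * log (c v.2.2) :=
    fun v => mul_log_mul_div_eq ENNReal.toReal_nonneg (hpa v) (hpb v) (hpc v)
  have hmass : ∑ v, p v = ∑ u, c u := by
    simp only [p, c, sum_toReal_measure_preimage_singleton hR,
      sum_toReal_measure_preimage_singleton hZ, coe_univ, Set.preimage_univ]
  have hsupp : ∀ v, a (v.1, v.2.2) * b (v.2.1, v.2.2) / c v.2.2 = 0 → p v = 0 := by
    intro v hq
    refine le_antisymm ?_ ENNReal.toReal_nonneg
    rcases div_eq_zero_iff.1 hq with h | h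
    · rcases mul_eq_zero.1 h with h | h
      · exact h ▸ hpa v
      · exact h ▸ hpb v
    · exact h ▸ hpc v
  have hgibbs := sum_mul_log_le_sum_mul_log (p := p)
    (q := fun v => a (v.1, v.2.2) * b (v.2.1, v.2.2) / c v.2.2) (fun _ => ENNReal.toReal_nonneg)
    (fun _ => by positivity) hsupp
    (by rw [sum_mul_div_eq_of_sum_eq (sum_toReal_measure_preimage_prodMk hX Z)
      (sum_toReal_measure_preimage_prodMk hY Z), hmass])
  simp only [hlog, sum_sub_distrib, sum_add_distrib] at hgibbs
  simp only [condMutualInfo, condEntropy, eXZ, eYZ, eZ, eXYZ]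
  linarith

theorem condEntropy_nonneg [Fintype S] [Fintype T] [MeasurableSpace S]
    [MeasurableSingletonClass S] [MeasurableSpace T] [MeasurableSingletonClass T]
    {X : Ω → S} {Y : Ω → T} (hX : Measurable X) (hY : Measurable Y) :
    0 ≤ condEntropy μ X Y := by
  have h := condMutualInfo_nonneg (μ := μ) hX hX hY
  have e : entropy μ (fun ω => ((X ω, X ω), Y ω)) = entropy μ (fun ω => (X ω, Y ω)) :=
    entropy_eq_of_eq_iff fun _ _ => by simp
  simp only [condMutualInfo, condEntropy, e] at h ⊢
  linarith

end FiniteMeasure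

lemma condMutualInfo_add_condEntropy_eq {α β γ δ ε : Type*} [Fintype α] [Fintype β] [Fintype γ]
    [Fintype δ] [Fintype ε] (A : Ω → α) (Q : Ω → β) (X : Ω → γ) (Y : Ω → δ) (f : γ → ε) :
    condMutualInfo μ Y X Q + condEntropy μ A (fun ω => (Q ω, X ω))
      = condMutualInfo μ Y A (fun ω => (Q ω, f (X ω)))
        + condMutualInfo μ Y (fun ω => f (X ω)) Q
        + condMutualInfo μ Y X (fun ω => (A ω, Q ω, f (X ω)))
        + condEntropy μ A (fun ω => ((Y ω, X ω), Q ω)) := by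
  have e₁ : entropy μ (fun ω => (Q ω, X ω)) = entropy μ (fun ω => (X ω, Q ω)) :=
    entropy_eq_of_eq_iff fun _ _ => by grind
  have e₂ : entropy μ (fun ω => (f (X ω), Q ω)) = entropy μ (fun ω => (Q ω, f (X ω))) :=
    entropy_eq_of_eq_iff fun _ _ => by grind
  have e₃ : entropy μ (fun ω => ((Y ω, f (X ω)), Q ω))
      = entropy μ (fun ω => (Y ω, Q ω, f (X ω))) :=
    entropy_eq_of_eq_iff fun _ _ => by grind
  have e₄ : entropy μ (fun ω => (Y ω, A ω, Q ω, f (X ω)))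
      = entropy μ (fun ω => ((Y ω, A ω), Q ω, f (X ω))) :=
    entropy_eq_of_eq_iff fun _ _ => by grind
  have e₅ : entropy μ (fun ω => (X ω, A ω, Q ω, f (X ω)))
      = entropy μ (fun ω => (A ω, Q ω, X ω)) :=
    entropy_eq_of_eq_iff fun _ _ => by grind
  have e₆ : entropy μ (fun ω => ((Y ω, X ω), A ω, Q ω, f (X ω)))
      = entropy μ (fun ω => (A ω, (Y ω, X ω), Q ω)) :=
    entropy_eq_of_eq_iff fun _ _ => by grind
  simp only [condMutualInfo, condEntropy, e₁, e₂, e₃, e₄, e₅, e₆]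
  ring

end

/-- If `A, Q, X, Y` are finite-valued random variables and `Z = f(X)`, then
`I(Y ; A | (Q, Z)) ≤ I(Y ; X | Q) + H(A | (Q, X))`. -/
theorem stmt_8 {Ω : Type*} [MeasurableSpace Ω] (μ : Measure Ω) [IsProbabilityMeasure μ]
    {α β γ δ ε : Type*} [Fintype α] [Fintype β] [Fintype γ] [Fintype δ] [Fintype ε]
    [MeasurableSpace α] [MeasurableSingletonClass α]
    [MeasurableSpace β] [MeasurableSingletonClass β]
    [MeasurableSpace γ] [MeasurableSingletonClass γ]
    [MeasurableSpace δ] [MeasurableSingletonClass δ]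
    [MeasurableSpace ε] [MeasurableSingletonClass ε]
    (A : Ω → α) (Q : Ω → β) (X : Ω → γ) (Y : Ω → δ) (f : γ → ε)
    (hA : Measurable A) (hQ : Measurable Q) (hX : Measurable X) (hY : Measurable Y) :
    condMutualInfo μ Y A (fun ω => (Q ω, f (X ω)))
      ≤ condMutualInfo μ Y X Q + condEntropy μ A (fun ω => (Q ω, X ω)) := by
  have hfX : Measurable (fun ω => f (X ω)) := (measurable_of_countable f).comp hX
  rw [condMutualInfo_add_condEntropy_eq A Q X Y f]
  have h₁ := condMutualInfo_nonneg (μ := μ) hY hfX hQ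
  have h₂ := condMutualInfo_nonneg (μ := μ) hY hX (hA.prodMk (hQ.prodMk hfX))
  have h₃ := condEntropy_nonneg (μ := μ) hA ((hY.prodMk hX).prodMk hQ)
  linarith
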